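/- For every n ≥ 3 there exists a finite maximal joinless code P ⊆ n{0,1}* such that for every leaf v of the interior dag of P and every i ∈ {1,…,n}, v_+ ≠ {(v_1,…,v_{i−1}, v_i a, v_{i+1},…,v_n) : a ∈ {0,1}}, where v_+ = {v·a : a ∈ A_{ε,n}} ∩ P. In particular, for n = 3 the set P = {(0,0,ε), (1,ε,0), (ε,1,1), (0,1,0), (1,0,1)} is a finite maximal joinless code with this property. -/

import Mathlib

namespace BrinThompson

abbrev W (A : Type*) (n : ℕ) : Type _ := Fin n → List A

variable {A : Type*} {n : ℕ}

/-- Coordinatewise concatenation in `nA*`. -/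
def cat (u x : W A n) : W A n := fun i => u i ++ x i

/-- `u ≤_init v` : `u` is an initial factor of `v`. -/
def initLE (u v : W A n) : Prop := ∃ x : W A n, v = cat u x

/-- `w` is the join (least upper bound) of `u` and `v` w.r.t. `≤_init`. -/
def isJoin (u v w : W A n) : Prop :=
  initLE u w ∧ initLE v w ∧ ∀ z : W A n, initLE u z → initLE v z → initLE w z

/-- `u` and `v` have a join. -/
def HasJoin (u v : W A n) : Prop := ∃ w : W A n, isJoin u v w

/-- A joinless code: no two distinct elements have a join. -/
def JoinlessCode (S : Set (W A n)) : Prop :=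
  ∀ u ∈ S, ∀ v ∈ S, u ≠ v → ¬ HasJoin u v

/-- A maximal joinless code: joinless, and every element of `nA*` has a join
with some element of the code. -/
def MaxJoinlessCode (S : Set (W A n)) : Prop :=
  JoinlessCode S ∧ ∀ x : W A n, ∃ p ∈ S, HasJoin x p

/-- The right ideal `C · nA*` generated by `C`. -/
def genIdeal (C : Set (W A n)) : Set (W A n) := {w | ∃ c ∈ C, ∃ x : W A n, w = cat c x}

def IsRightIdeal (R : Set (W A n)) : Prop := genIdeal R = R

/-- An initial factor code: pairwise `≤_init`-incomparable set. -/
def InitFactorCode (S : Set (W A n)) : Prop :=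
  ∀ u ∈ S, ∀ v ∈ S, initLE u v → u = v

/-- `A_{ε,n}`: tuples with one coordinate a single letter and the rest empty. -/
def Aeps (A : Type*) (n : ℕ) : Set (W A n) :=
  {w | ∃ i : Fin n, ∃ a : A, w i = [a] ∧ ∀ j : Fin n, j ≠ i → w j = []}

/-- `(ε)^n`, the tuple of empty strings. -/
def epsn (A : Type*) (n : ℕ) : W A n := fun _ => []

/-- `nA^ω`: `n`-tuples of one-sided infinite sequences over `A`. -/
abbrev Winf (A : Type*) (n : ℕ) : Type _ := Fin n → ℕ → A

/-- Concatenation of a finite tuple `p ∈ nA*` with an infinite tuple `u ∈ nA^ω`. -/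
def catInf (p : W A n) (u : Winf A n) : Winf A n :=
  fun i k => if h : k < (p i).length then (p i).get ⟨k, h⟩ else u i (k - (p i).length)

/-- `v` is an interior vertex of the `P`-dag: a strict initial factor of
some element of `P`. -/
def Interior (P : Set (W A n)) (v : W A n) : Prop := ∃ p ∈ P, initLE v p ∧ v ≠ p

/-- The child of `v` in direction `i`, extended by letter `a`. -/
def child (v : W A n) (i : Fin n) (a : A) : W A n := Function.update v i (v i ++ [a])

/-- A leaf of the interior dag of `P`: an interior vertex none of whose
children is interior. -/
def InteriorLeaf (P : Set (W A n)) (v : W A n) : Prop :=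
  Interior P v ∧ ∀ (i : Fin n) (a : A), ¬ Interior P (child v i a)

/-- `v_+ = (v · A_{ε,n}) ∩ P`, the set of children of `v` belonging to `P`. -/
def vplus (P : Set (W A n)) (v : W A n) : Set (W A n) :=
  {w | (∃ (i : Fin n) (a : A), w = child v i a) ∧ w ∈ P}

/-- The depth of a vertex: the sum of the coordinate lengths. -/
def depth (v : W A n) : ℕ := ∑ i, (v i).length

/-- One-step restriction of `P` at `(p, i)`. -/
def oneStep (P : Set (W A n)) (p : W A n) (i : Fin n) : Set (W A n) :=
  (P \ {p}) ∪ {w | ∃ a : A, w = child p i a}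

/-- One step in a sequence of one-step restrictions. -/
def RestrStep (P Q : Set (W A n)) : Prop := ∃ p ∈ P, ∃ i : Fin n, Q = oneStep P p i

/-- The box code `A^{k_1} × … × A^{k_n}`. -/
def box (A : Type*) {n : ℕ} (k : Fin n → ℕ) : Set (W A n) :=
  {w | ∀ i : Fin n, (w i).length = k i}

/-- Elementwise join `P ∨ Q` of two sets, ranging over the joins that exist. -/
def setJoin (P Q : Set (W A n)) : Set (W A n) :=
  {w | ∃ p ∈ P, ∃ q ∈ Q, isJoin p q w}

/-- `ℓ(S)`: the maximum coordinate length occurring in `S`. -/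
noncomputable def ell (S : Set (W A n)) : ℕ :=
  sSup {m | ∃ z ∈ S, ∃ i : Fin n, (z i).length = m}

/-- An element of `n RI^fin_A`: an injective right ideal morphism of `nA*`
whose domain code and image code are finite maximal joinless codes.
`toFun` is a total function whose values outside `Dom` are irrelevant. -/
structure RIMfin (A : Type*) (n : ℕ) where
  Dom : Set (W A n)
  toFun : W A n → W A n
  domC : Set (W A n)
  imC : Set (W A n)
  ideal : IsRightIdeal Dom
  morph : ∀ x ∈ Dom, ∀ w : W A n, toFun (cat x w) = cat (toFun x) w
  inj : Set.InjOn toFun Dom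
  domC_gen : genIdeal domC = Dom
  imC_gen : genIdeal imC = toFun '' Dom
  domC_fin : domC.Finite
  domC_max : MaxJoinlessCode domC
  imC_fin : imC.Finite
  imC_max : MaxJoinlessCode imC

/-- `ℓ(f) = max{ℓ(z) : z ∈ domC(f) ∪ imC(f)}`. -/
noncomputable def ellF (F : RIMfin A n) : ℕ := ell (F.domC ∪ F.imC)

/-- `G` extends `F` (as partial functions). -/
def Extends (F G : RIMfin A n) : Prop :=
  F.Dom ⊆ G.Dom ∧ ∀ x ∈ F.Dom, G.toFun x = F.toFun x

/-- `F` and `G` are equal as partial functions. -/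
def EquivRIM (F G : RIMfin A n) : Prop :=
  F.Dom = G.Dom ∧ ∀ x ∈ F.Dom, F.toFun x = G.toFun x

/-- `G` is a maximal extension of `F` in `n RI^fin_A`. -/
def MaxExtension (F G : RIMfin A n) : Prop :=
  Extends F G ∧ ∀ H : RIMfin A n, Extends G H → EquivRIM G H


/-- The Lawson–Vdovina example: `{(0,0,ε),(1,ε,0),(ε,1,1),(0,1,0),(1,0,1)}`. -/
def P3 : Set (W Bool 3) :=
  {![[false], [false], []], ![[true], [], [false]], ![[], [true], [true]],
   ![[false], [true], [false]], ![[true], [false], [true]]}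

/-! Two tuples have a join iff in every coordinate one word is a prefix of the other, so for `P3`
joinlessness and maximality are finite checks: the words of `P3` have length at most one, hence
whether `x` has a join with one of them depends only on the first letters of the coordinates of
`x`. No two elements of `P3` are siblings, so no `v_+` can be a full set of children in one
direction. Padding with empty coordinates preserves all of this and carries the example to every
`n ≥ 3`. -/

lemma initLE_iff_forall_prefix {u v : W A n} : initLE u v ↔ ∀ i, u i <+: v i := by
  constructor
  · rintro ⟨x, rfl⟩ i
    exact ⟨x i, rfl⟩
  · intro h
    refine ⟨fun i => (v i).drop (u i).length, funext fun i => ?_⟩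
    obtain ⟨t, ht⟩ := h i
    simp [cat, ← ht]

lemma hasJoin_iff_forall_prefix_or_prefix {u v : W A n} :
    HasJoin u v ↔ ∀ i, u i <+: v i ∨ v i <+: u i := by
  simp only [HasJoin, isJoin, initLE_iff_forall_prefix]
  constructor
  · rintro ⟨w, hu, hv, -⟩ i
    exact List.prefix_or_prefix_of_prefix (hu i) (hv i)
  · intro h
    classical
    refine ⟨fun i => if u i <+: v i then v i else u i, fun i => ?_, fun i => ?_,
      fun z hu hv i => ?_⟩ <;>
      by_cases hc : u i <+: v i <;> simp only [hc, if_true, if_false, List.prefix_refl]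
    exacts [(h i).resolve_left hc, hv i, hu i]

lemma prefix_or_prefix_take_iff {l p : List A} {k : ℕ} (hp : p.length ≤ k) :
    (l.take k <+: p ∨ p <+: l.take k) ↔ (l <+: p ∨ p <+: l) := by
  rw [List.prefix_take_iff, and_iff_left hp]
  constructor
  · rintro (hl | hl)
    · by_cases hk : l.length ≤ k
      · rw [List.take_of_length_le hk] at hl
        exact Or.inl hl
      · have hlen : p.length ≤ (l.take k).length := by simp; omega
        exact Or.inr (hl.eq_of_length_le hlen ▸ List.take_prefix k l)
    · exact Or.inr hl
  · rintro (hl | hl)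
    · rw [List.take_of_length_le (hl.length_le.trans hp)]
      exact Or.inl hl
    · exact Or.inr hl

lemma hasJoin_take_iff {x p : W A n} {k : ℕ} (hp : ∀ i, (p i).length ≤ k) :
    HasJoin (fun i => (x i).take k) p ↔ HasJoin x p := by
  simp only [hasJoin_iff_forall_prefix_or_prefix, prefix_or_prefix_take_iff (hp _)]

def NoSiblings (P : Set (W A n)) : Prop :=
  ∀ (v : W A n) (i : Fin n) (a b : A), child v i a ∈ P → child v i b ∈ P → a = b

lemma update_dropLast_child (v : W A n) (i : Fin n) (a : A) :
    Function.update (child v i a) i (child v i a i).dropLast = v := by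
  simp [child]

lemma getLast?_child (v : W A n) (i : Fin n) (a : A) : (child v i a i).getLast? = some a := by
  simp [child]

lemma noSiblings_of_getLast?_eq {P : Set (W A n)}
    (h : ∀ p ∈ P, ∀ q ∈ P, ∀ i, Function.update p i (p i).dropLast =
      Function.update q i (q i).dropLast → (p i).getLast? = (q i).getLast?) :
    NoSiblings P := by
  intro v i a b ha hb
  have := h _ ha _ hb i (by rw [update_dropLast_child, update_dropLast_child])
  simpa [getLast?_child] using this

lemma NoSiblings.vplus_ne_children [Nontrivial A] {P : Set (W A n)} (hP : NoSiblings P)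
    (v : W A n) (i : Fin n) : vplus P v ≠ {w | ∃ a : A, w = child v i a} := by
  intro heq
  obtain ⟨a, b, hab⟩ := exists_pair_ne A
  have mem_P (c : A) : child v i c ∈ P := by
    have : child v i c ∈ vplus P v := heq ▸ ⟨c, rfl⟩
    exact this.2
  exact hab (hP v i a b (mem_P a) (mem_P b))

variable {m : ℕ}

def padEmpty (u : W A m) : W A n :=
  fun j => if hj : (j : ℕ) < m then u ⟨j, hj⟩ else []

def takeCoords (h : m ≤ n) (x : W A n) : W A m := fun k => x (Fin.castLE h k)

lemma padEmpty_of_lt (u : W A m) {j : Fin n} (hj : (j : ℕ) < m) : padEmpty u j = u ⟨j, hj⟩ :=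
  dif_pos hj

lemma padEmpty_of_le (u : W A m) {j : Fin n} (hj : m ≤ j) : padEmpty u j = [] :=
  dif_neg (Nat.not_lt.mpr hj)

lemma padEmpty_castLE (h : m ≤ n) (u : W A m) (k : Fin m) :
    padEmpty u (Fin.castLE h k) = u k :=
  padEmpty_of_lt u k.2

lemma takeCoords_padEmpty (h : m ≤ n) (u : W A m) : takeCoords h (padEmpty u) = u :=
  funext (padEmpty_castLE h u)

lemma hasJoin_padEmpty_iff (h : m ≤ n) {x : W A n} {p : W A m} :
    HasJoin x (padEmpty p) ↔ HasJoin (takeCoords h x) p := by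
  simp only [hasJoin_iff_forall_prefix_or_prefix]
  refine ⟨fun hx k => by simpa [takeCoords, padEmpty_castLE] using hx (Fin.castLE h k),
    fun hx j => ?_⟩
  by_cases hj : (j : ℕ) < m
  · simpa [takeCoords, padEmpty_of_lt p hj] using hx ⟨j, hj⟩
  · simp [padEmpty_of_le p (Nat.not_lt.mp hj)]

lemma MaxJoinlessCode.image_padEmpty (h : m ≤ n) {P : Set (W A m)} (hP : MaxJoinlessCode P) :
    MaxJoinlessCode (padEmpty '' P : Set (W A n)) := by
  refine ⟨?_, fun x => ?_⟩
  · rintro _ ⟨p, hp, rfl⟩ _ ⟨q, hq, rfl⟩ hne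
    rw [hasJoin_padEmpty_iff h, takeCoords_padEmpty]
    exact hP.1 p hp q hq (ne_of_apply_ne _ hne)
  · obtain ⟨p, hp, hxp⟩ := hP.2 (takeCoords h x)
    exact ⟨padEmpty p, Set.mem_image_of_mem _ hp, (hasJoin_padEmpty_iff h).mpr hxp⟩

lemma exists_castLE_of_child_eq_padEmpty (h : m ≤ n) {v : W A n} {i : Fin n} {a : A}
    {p : W A m} (hp : child v i a = padEmpty p) :
    ∃ k : Fin m, Fin.castLE h k = i ∧ p = child (takeCoords h v) k a := by
  have hi : (i : ℕ) < m := by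
    by_contra hi
    have := congrFun hp i
    simp [child, padEmpty_of_le p (Nat.not_lt.mp hi)] at this
  refine ⟨⟨i, hi⟩, rfl, funext fun k => ?_⟩
  rw [← padEmpty_castLE h p k, ← hp]
  by_cases hk : k = ⟨i, hi⟩
  · subst hk; simp [child, takeCoords]
  · have : Fin.castLE h k ≠ i := fun hki => hk (Fin.ext (by simp [← hki]))
    simp [child, takeCoords, Function.update_of_ne this, Function.update_of_ne hk]

lemma NoSiblings.image_padEmpty (h : m ≤ n) {P : Set (W A m)} (hP : NoSiblings P) :
    NoSiblings (padEmpty '' P : Set (W A n)) := by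
  rintro v i a b ⟨p, hp, hpa⟩ ⟨q, hq, hqb⟩
  obtain ⟨k, rfl, rfl⟩ := exists_castLE_of_child_eq_padEmpty h hpa.symm
  obtain ⟨k', hk', rfl⟩ := exists_castLE_of_child_eq_padEmpty h hqb.symm
  obtain rfl := Fin.castLE_injective h hk'
  exact hP _ _ a b hp hq

def P3fin : Finset (W Bool 3) :=
  {![[false], [false], []], ![[true], [], [false]], ![[], [true], [true]],
   ![[false], [true], [false]], ![[true], [false], [true]]}

lemma coe_P3fin : (P3fin : Set (W Bool 3)) = P3 := by
  simp [P3fin, P3]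

lemma P3_finite : P3.Finite :=
  coe_P3fin ▸ P3fin.finite_toSet

lemma P3_joinless : JoinlessCode P3 := by
  have key : ∀ p ∈ P3fin, ∀ q ∈ P3fin, p ≠ q →
      ∃ i, ¬ (p i <+: q i ∨ q i <+: p i) := by
    decide
  rw [← coe_P3fin]
  intro p hp q hq hne hpq
  obtain ⟨i, hi⟩ := key p hp q hq hne
  exact hi (hasJoin_iff_forall_prefix_or_prefix.mp hpq i)

lemma P3_maxJoinless : MaxJoinlessCode P3 := by
  have key : ∀ a b c : Option Bool, ∃ p ∈ P3fin,
      ∀ i, (![a, b, c] i).toList <+: p i ∨ p i <+: (![a, b, c] i).toList := by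
    decide
  have hlen : ∀ p ∈ P3fin, ∀ i, (p i).length ≤ 1 := by decide
  refine ⟨P3_joinless, fun x => ?_⟩
  obtain ⟨p, hp, hxp⟩ := key (x 0).head? (x 1).head? (x 2).head?
  have hx : (fun i => (x i).take 1) =
      fun i => (![(x 0).head?, (x 1).head?, (x 2).head?] i).toList := by
    funext i
    fin_cases i <;> simp [List.take_one]
  refine ⟨p, coe_P3fin ▸ hp, (hasJoin_take_iff (hlen p hp)).mp ?_⟩
  rw [hx, hasJoin_iff_forall_prefix_or_prefix]
  exact hxp

lemma P3_noSiblings : NoSiblings P3 := by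
  rw [← coe_P3fin]
  apply noSiblings_of_getLast?_eq
  decide

/-- For every `n ≥ 3` there is a finite maximal joinless code in `n{0,1}*`
such that no leaf of the interior dag has its `v_+` equal to a full set of
children in one direction; for `n = 3`, `P3` is such a code. -/
theorem exists_maxJoinless_no_full_interiorLeaf :
    (∀ n : ℕ, 3 ≤ n → ∃ P : Set (W Bool n), P.Finite ∧ MaxJoinlessCode P ∧
      ∀ v : W Bool n, InteriorLeaf P v → ∀ i : Fin n,
        vplus P v ≠ {w | ∃ a : Bool, w = child v i a}) ∧
    (P3.Finite ∧ MaxJoinlessCode P3 ∧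
      ∀ v : W Bool 3, InteriorLeaf P3 v → ∀ i : Fin 3,
        vplus P3 v ≠ {w | ∃ a : Bool, w = child v i a}) :=
  ⟨fun _ hn => ⟨padEmpty '' P3, P3_finite.image _, P3_maxJoinless.image_padEmpty hn,
      fun v _ => (P3_noSiblings.image_padEmpty hn).vplus_ne_children v⟩,
    P3_finite, P3_maxJoinless, fun v _ => P3_noSiblings.vplus_ne_children v⟩

end BrinThompson
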